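/- arXiv:2209.03722 — 3 statements merged into one kernel-verified Lean document; each statement's English description precedes it below -/
import Mathlib

section
/- Let ε ∈ (0,1). For every δ > 0 there exists n₀ such that for all n ≥ n₀, every integer d ≥ 1, and every d-regular finite simple graph G on n vertices, with p = (1−ε)/d, the probability that every connected component of the percolated graph G_p has order at most 9·(log n)/ε² is at least 1 − δ (log denotes the natural logarithm). -/
open Finset

variable {V : Type*}

/-- The number of neighbours of `v` in `G`. -/
noncomputable def degAt (G : SimpleGraph V) (v : V) : ℕ := {w | G.Adj v w}.ncard

/-- `G` is `d`-regular. -/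
def IsRegOfDeg (G : SimpleGraph V) (d : ℕ) : Prop := ∀ v, degAt G v = d

/-- The order (number of vertices) of the connected component of `v` in `H`. -/
noncomputable def compCard (H : SimpleGraph V) (v : V) : ℕ := {w | H.Reachable v w}.ncard

/-- The order of the largest connected component of `H`. -/
noncomputable def maxCompCard [Fintype V] (H : SimpleGraph V) : ℕ :=
  Finset.univ.sup (compCard H)

/-- The edge set of `G` as a `Finset`. -/
noncomputable def edgeFins (G : SimpleGraph V) [Fintype V] : Finset (Sym2 V) :=
  G.edgeSet.toFinite.toFinset

open Classical in
/-- The probability of the event `A` under bond percolation on `G` with retention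
probability `p`: each edge of `G` is retained independently with probability `p`. -/
noncomputable def percProb [Fintype V] (G : SimpleGraph V) (p : ℝ)
    (A : SimpleGraph V → Prop) : ℝ :=
  ∑ F ∈ (edgeFins G).powerset,
    if A (SimpleGraph.fromEdgeSet (↑F)) then
      p ^ F.card * (1 - p) ^ ((edgeFins G).card - F.card) else 0

open Classical in
/-- Percolation expectation of an ℝ-valued observable. -/
noncomputable def percExp [Fintype V] (G : SimpleGraph V) (p : ℝ)
    (X : SimpleGraph V → ℝ) : ℝ :=
  ∑ F ∈ (edgeFins G).powerset,
    p ^ F.card * (1 - p) ^ ((edgeFins G).card - F.card) *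
      X (SimpleGraph.fromEdgeSet (↑F))

open Classical in
/-- The probability of the event `A` under three independent bond percolations on `G`
with retention probabilities `p₁, p₂, p₃`. -/
noncomputable def percProb3 [Fintype V] (G : SimpleGraph V) (p₁ p₂ p₃ : ℝ)
    (A : SimpleGraph V → SimpleGraph V → SimpleGraph V → Prop) : ℝ :=
  ∑ F₁ ∈ (edgeFins G).powerset, ∑ F₂ ∈ (edgeFins G).powerset, ∑ F₃ ∈ (edgeFins G).powerset,
    if A (SimpleGraph.fromEdgeSet (↑F₁)) (SimpleGraph.fromEdgeSet (↑F₂))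
        (SimpleGraph.fromEdgeSet (↑F₃)) then
      (p₁ ^ F₁.card * (1 - p₁) ^ ((edgeFins G).card - F₁.card)) *
      (p₂ ^ F₂.card * (1 - p₂) ^ ((edgeFins G).card - F₂.card)) *
      (p₃ ^ F₃.card * (1 - p₃) ^ ((edgeFins G).card - F₃.card))
    else 0

/-- The Cartesian product of the graphs `Gs i`, `i : Fin t`. -/
def prodGraph {t : ℕ} {V : Fin t → Type*} (Gs : ∀ i, SimpleGraph (V i)) :
    SimpleGraph (∀ i, V i) where
  Adj u v := ∃ i, (Gs i).Adj (u i) (v i) ∧ ∀ j, j ≠ i → u j = v j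
  symm := by
    constructor
    rintro u v ⟨i, hadj, h⟩
    exact ⟨i, hadj.symm, fun j hj => (h j hj).symm⟩
  loopless := by
    constructor
    rintro u ⟨i, hadj, -⟩
    exact (Gs i).irrefl hadj

/-!
Explore the cluster of a vertex `v` edge by edge. Every vertex found brings at most `d` edges to
examine, each retained with probability `p = (1 - ε) / d`, so reaching `k` vertices takes at least
`k - 1` successes among `d k` Bernoulli(p) trials. The exponential-moment bound for this binomial
tail at `y = 1 / (1 - ε)` gives `P(|C(v)| ≥ k) ≤ (1 - ε)^(k-1) e^(εk) ≤ e^(-ε²k/2) / (1 - ε)`, using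
`log (1 - ε) ≤ -ε - ε²/2`. For `k ≥ 9 log n / ε²` this is at most `n⁻² / (1 - ε)`, and a union
bound over the `n` vertices finishes.
-/

section BernoulliSubset

variable {α : Type*} {p : ℝ}

open Classical in
noncomputable def bernoulliProb (E : Finset α) (p : ℝ) (A : Finset α → Prop) : ℝ :=
  ∑ F ∈ E.powerset, if A F then p ^ #F * (1 - p) ^ (#E - #F) else 0

lemma bernoulliProb_eq_zero {E : Finset α} {A : Finset α → Prop} (h : ∀ F ⊆ E, ¬ A F) :
    bernoulliProb E p A = 0 :=
  Finset.sum_eq_zero fun F hF => if_neg (h F (mem_powerset.1 hF))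

lemma bernoulliProb_nonneg (hp0 : 0 ≤ p) (hp1 : p ≤ 1) (E : Finset α) (A : Finset α → Prop) :
    0 ≤ bernoulliProb E p A := by
  have : 0 ≤ 1 - p := by linarith
  unfold bernoulliProb
  positivity

lemma bernoulliProb_mono (hp0 : 0 ≤ p) (hp1 : p ≤ 1) {E : Finset α} {A B : Finset α → Prop}
    (h : ∀ F ⊆ E, A F → B F) : bernoulliProb E p A ≤ bernoulliProb E p B := by
  have : 0 ≤ 1 - p := by linarith
  refine Finset.sum_le_sum fun F hF => ?_
  split_ifs with hA hB
  · exact le_rfl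
  · exact absurd (h F (mem_powerset.1 hF) hA) hB
  · positivity
  · exact le_rfl

lemma bernoulliProb_add_bernoulliProb_not (E : Finset α) (p : ℝ) (A : Finset α → Prop) :
    bernoulliProb E p A + bernoulliProb E p (fun F => ¬ A F) = 1 := by
  classical
  rw [bernoulliProb, bernoulliProb, ← Finset.sum_add_distrib]
  calc _ = ∑ F ∈ E.powerset, p ^ #F * (1 - p) ^ (#E - #F) :=
        Finset.sum_congr rfl fun F _ => by by_cases hA : A F <;> simp [hA]
    _ = 1 := by rw [Finset.sum_pow_mul_eq_add_pow, add_sub_cancel, one_pow]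

lemma bernoulliProb_le_one (hp0 : 0 ≤ p) (hp1 : p ≤ 1) (E : Finset α) (A : Finset α → Prop) :
    bernoulliProb E p A ≤ 1 := by
  linarith [bernoulliProb_add_bernoulliProb_not E p A,
    bernoulliProb_nonneg hp0 hp1 E fun F => ¬ A F]

lemma one_sub_bernoulliProb_le (hp0 : 0 ≤ p) (hp1 : p ≤ 1) {E : Finset α}
    {A B : Finset α → Prop} (h : ∀ F ⊆ E, ¬ B F → A F) :
    1 - bernoulliProb E p B ≤ bernoulliProb E p A := by
  linarith [bernoulliProb_add_bernoulliProb_not E p B, bernoulliProb_mono hp0 hp1 h]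

open Classical in
lemma bernoulliProb_exists_le_sum (hp0 : 0 ≤ p) (hp1 : p ≤ 1) (E : Finset α) {ι : Type*}
    (s : Finset ι) (B : ι → Finset α → Prop) :
    bernoulliProb E p (fun F => ∃ i ∈ s, B i F) ≤ ∑ i ∈ s, bernoulliProb E p (B i) := by
  have : 0 ≤ 1 - p := by linarith
  simp only [bernoulliProb]
  rw [Finset.sum_comm]
  refine Finset.sum_le_sum fun F _ => ?_
  split_ifs with hA
  · obtain ⟨i, hi, hBi⟩ := hA
    calc _ = if B i F then p ^ #F * (1 - p) ^ (#E - #F) else 0 := (if_pos hBi).symm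
      _ ≤ _ := Finset.single_le_sum (f := fun j => if B j F then _ else 0)
          (fun j _ => by positivity) hi
  · positivity

lemma bernoulliProb_eq_of_mem [DecidableEq α] {E : Finset α} {e : α} (he : e ∈ E) (p : ℝ)
    (A : Finset α → Prop) :
    bernoulliProb E p A = p * bernoulliProb (E.erase e) p (fun F => A (insert e F))
      + (1 - p) * bernoulliProb (E.erase e) p A := by
  have hcard : #E = #(E.erase e) + 1 := (card_erase_add_one he).symm
  rw [bernoulliProb, ← insert_erase he, sum_powerset_insert (notMem_erase e E), add_comm,
    bernoulliProb, bernoulliProb, mul_sum, mul_sum, insert_erase he]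
  congr 1 <;> refine sum_congr rfl fun F hF => ?_ <;>
    have hFs : #F ≤ #(E.erase e) := card_le_card (mem_powerset.1 hF)
  · have heF : e ∉ F := fun h => notMem_erase e E (mem_powerset.1 hF h)
    split_ifs
    · rw [card_insert_of_notMem heF, hcard, Nat.add_sub_add_right, pow_succ]; ring
    · simp
  · split_ifs
    · rw [hcard, Nat.sub_add_comm hFs, pow_succ]; ring
    · simp

end BernoulliSubset

section Reach

variable {V : Type*}

def reachSet (F : Finset (Sym2 V)) (D : Finset V) : Set V :=
  {y | ∃ u ∈ D, (SimpleGraph.fromEdgeSet (F : Set (Sym2 V))).Reachable u y}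

lemma subset_reachSet (F : Finset (Sym2 V)) (D : Finset V) : (D : Set V) ⊆ reachSet F D :=
  fun u hu => ⟨u, hu, .rfl⟩

lemma SimpleGraph.Reachable.mem_of_adj_closed {G : SimpleGraph V} {S : Set V}
    (hS : ∀ a b, G.Adj a b → a ∈ S → b ∈ S) {a b : V} (hab : G.Reachable a b) (ha : a ∈ S) :
    b ∈ S := by
  rw [SimpleGraph.reachable_iff_reflTransGen] at hab
  induction hab with
  | refl => exact ha
  | tail _ hbc ih => exact hS _ _ hbc ih

lemma reachSet_subset_of_closed {F : Finset (Sym2 V)} {D : Finset V} {S : Set V}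
    (hDS : (D : Set V) ⊆ S) (hS : ∀ a b, s(a, b) ∈ F → a ≠ b → a ∈ S → b ∈ S) :
    reachSet F D ⊆ S := by
  rintro y ⟨u, hu, huy⟩
  refine huy.mem_of_adj_closed (fun a b hab => ?_) (hDS hu)
  rw [SimpleGraph.fromEdgeSet_adj] at hab
  exact hS a b hab.1 hab.2

lemma reachSet_eq_self_of_forall_notMem {F : Finset (Sym2 V)} {D : Finset V}
    (h : ∀ e ∈ F, ∀ u ∈ D, u ∉ e) : reachSet F D = D :=
  (reachSet_subset_of_closed subset_rfl fun a _ hab _ ha =>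
    absurd (Sym2.mem_mk_left a _) (h _ hab a ha)).antisymm (subset_reachSet F D)

lemma reachSet_insert [DecidableEq V] {F : Finset (Sym2 V)} {D : Finset V} {u x : V} (hu : u ∈ D) :
    reachSet (insert s(u, x) F) D = reachSet F (insert x D) := by
  apply (reachSet_subset_of_closed _ fun a b hab hne ha => ?_).antisymm
  · have hmono : (SimpleGraph.fromEdgeSet (F : Set (Sym2 V))).Reachable ≤
        (SimpleGraph.fromEdgeSet ((insert s(u, x) F : Finset _) : Set (Sym2 V))).Reachable :=
      fun a b hab => hab.mono (SimpleGraph.fromEdgeSet_mono (by simp))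
    have hux : (SimpleGraph.fromEdgeSet ((insert s(u, x) F : Finset _) : Set (Sym2 V))).Reachable
        u x := by
      by_cases h : u = x
      · exact h ▸ .rfl
      · exact SimpleGraph.Adj.reachable (by simp [h])
    rintro y ⟨a, ha, hay⟩
    rcases mem_insert.1 ha with rfl | ha
    · exact ⟨u, hu, hux.trans (hmono _ _ hay)⟩
    · exact ⟨a, ha, hmono _ _ hay⟩
  · exact (coe_subset.2 (subset_insert x D)).trans (subset_reachSet F _)
  · rcases mem_insert.1 hab with hab | hab
    · rcases Sym2.eq_iff.1 hab with ⟨-, rfl⟩ | ⟨-, rfl⟩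
      · exact subset_reachSet F _ (mem_insert_self b D)
      · exact subset_reachSet F _ (mem_insert_of_mem hu)
    · obtain ⟨c, hc, hca⟩ := ha
      exact ⟨c, hc, hca.trans (SimpleGraph.Adj.reachable (by simp [hab, hne]))⟩

lemma compCard_fromEdgeSet (F : Finset (Sym2 V)) (v : V) :
    compCard (SimpleGraph.fromEdgeSet (F : Set (Sym2 V))) v = (reachSet F {v}).ncard := by
  simp [compCard, reachSet]

end Reach

section Incidence

variable {V : Type*} [DecidableEq V]

def incidenceCount (E : Finset (Sym2 V)) (v : V) : ℕ := #{e ∈ E | v ∈ e}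

lemma incidenceCount_erase_le (E : Finset (Sym2 V)) (e : Sym2 V) (v : V) :
    incidenceCount (E.erase e) v ≤ incidenceCount E v :=
  card_le_card (filter_subset_filter _ (erase_subset e E))

lemma incidenceCount_erase_add_one {E : Finset (Sym2 V)} {e : Sym2 V} (he : e ∈ E) {v : V}
    (hv : v ∈ e) : incidenceCount (E.erase e) v + 1 = incidenceCount E v := by
  rw [incidenceCount, filter_erase, card_erase_add_one (mem_filter.2 ⟨he, hv⟩), incidenceCount]

lemma sum_incidenceCount_erase_add_one_le {E : Finset (Sym2 V)} {e : Sym2 V} (he : e ∈ E)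
    {D : Finset V} {u : V} (hu : u ∈ D) (hue : u ∈ e) :
    ∑ v ∈ D, incidenceCount (E.erase e) v + 1 ≤ ∑ v ∈ D, incidenceCount E v := by
  rw [← add_sum_erase D _ hu, ← add_sum_erase D _ hu, ← incidenceCount_erase_add_one he hue]
  have := sum_le_sum fun v (_ : v ∈ D.erase u) => incidenceCount_erase_le E e v
  omega

end Incidence

section Exploration

variable {V : Type*} [DecidableEq V]

lemma exploration_budget_erase {E : Finset (Sym2 V)} {e : Sym2 V} (he : e ∈ E) {D : Finset V}
    {u : V} (hu : u ∈ D) (hue : u ∈ e) (k d : ℕ) :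
    ∑ v ∈ D, incidenceCount (E.erase e) v + (k - #D) * d + 1
      ≤ ∑ v ∈ D, incidenceCount E v + (k - #D) * d := by
  have := sum_incidenceCount_erase_add_one_le he hu hue
  omega

lemma exploration_budget_insert {E : Finset (Sym2 V)} {e : Sym2 V} (he : e ∈ E) {D : Finset V}
    {u x : V} (hu : u ∈ D) (hue : u ∈ e) (hxe : x ∈ e) {k d : ℕ} (hk : #D < k)
    (hx : incidenceCount E x ≤ d) :
    ∑ v ∈ insert x D, incidenceCount (E.erase e) v + (k - #(insert x D)) * d + 1
      ≤ ∑ v ∈ D, incidenceCount E v + (k - #D) * d := by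
  by_cases hxD : x ∈ D
  · rw [insert_eq_of_mem hxD]
    exact exploration_budget_erase he hu hue k d
  have hsum := sum_incidenceCount_erase_add_one_le he hu hue
  have hxe' := incidenceCount_erase_add_one he hxe
  have hkD : (k - #D) * d = (k - (#D + 1)) * d + d := by
    rw [← Nat.succ_mul, Nat.succ_eq_add_one, Nat.sub_add_eq, Nat.sub_add_cancel (by omega)]
  rw [sum_insert hxD, card_insert_of_notMem hxD]
  omega

/-- Reveal the edges at `D` one at a time; a retained edge adds at most one vertex to `D`.
The budget `b` bounds the number of edges revealed before `k` vertices are found, so the order of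
the cluster is dominated by a `Bin(b, p)` count of new vertices, and the right-hand side is the
exponential-moment bound for its tail at `y`. -/
theorem bernoulliProb_le_ncard_reachSet_le {p y : ℝ} (hp0 : 0 ≤ p) (hp1 : p ≤ 1) (hy : 1 ≤ y)
    {d k : ℕ} (E : Finset (Sym2 V)) (hdeg : ∀ v, incidenceCount E v ≤ d) (D : Finset V) (b : ℕ)
    (hb : ∑ v ∈ D, incidenceCount E v + (k - #D) * d ≤ b) :
    bernoulliProb E p (fun F => k ≤ (reachSet F D).ncard) ≤ (1 - p + p * y) ^ b / y ^ (k - #D) := by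
  induction E using Finset.strongInduction generalizing D b with
  | H E ih =>
  have hX : 1 ≤ 1 - p + p * y := by nlinarith
  by_cases hk : k ≤ #D
  · rw [Nat.sub_eq_zero_of_le hk, pow_zero, div_one]
    exact (bernoulliProb_le_one hp0 hp1 _ _).trans (one_le_pow₀ hX)
  by_cases hE : ∃ e ∈ E, ∃ u ∈ D, u ∈ e
  swap
  · push Not at hE
    rw [bernoulliProb_eq_zero fun F hF hcard => ?_]
    · positivity
    rw [reachSet_eq_self_of_forall_notMem fun e he => hE e (hF he), Set.ncard_coe_finset] at hcard
    omega
  obtain ⟨e, he, u, hu, hue⟩ := hE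
  obtain ⟨x, rfl⟩ := Sym2.mem_iff_exists.1 hue
  have hdeg' v := (incidenceCount_erase_le E s(u, x) v).trans (hdeg v)
  obtain ⟨m, hm⟩ : ∃ m, k - #D = m + 1 := ⟨k - #D - 1, by omega⟩
  have hbudget := exploration_budget_erase he hu hue k d
  obtain ⟨b', rfl⟩ : ∃ b', b = b' + 1 := ⟨b - 1, by omega⟩
  have hclosed := ih _ (erase_ssubset he) hdeg' D b' (by omega)
  have hopen := ih _ (erase_ssubset he) hdeg' (insert x D) b'
    (by have := exploration_budget_insert he hu hue (Sym2.mem_mk_right u x) (not_le.1 hk) (hdeg x)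
        omega)
  have hopen' : bernoulliProb (E.erase s(u, x)) p (fun F => k ≤ (reachSet F (insert x D)).ncard)
      ≤ (1 - p + p * y) ^ b' / y ^ m :=
    hopen.trans (div_le_div_of_nonneg_left (by positivity) (by positivity)
      (pow_le_pow_right₀ hy (show m ≤ k - #(insert x D) by
        have := card_insert_le x D; omega)))
  rw [bernoulliProb_eq_of_mem he, hm]
  simp only [reachSet_insert hu]
  rw [hm] at hclosed
  have : 0 ≤ 1 - p := by linarith
  calc _ ≤ p * ((1 - p + p * y) ^ b' / y ^ m) + (1 - p) * ((1 - p + p * y) ^ b' / y ^ (m + 1)) := by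
        gcongr
    _ = (1 - p + p * y) ^ (b' + 1) / y ^ (m + 1) := by
        field_simp
        ring

end Exploration

section Graph

variable {V : Type*} [Fintype V]

lemma incidenceCount_edgeFins [DecidableEq V] (G : SimpleGraph V) (v : V) :
    incidenceCount (edgeFins G) v = degAt G v := by
  classical
  have hinc : {e ∈ edgeFins G | v ∈ e} = G.incidenceFinset v := by
    ext e
    simp [edgeFins, SimpleGraph.incidenceSet, and_comm]
  rw [incidenceCount, hinc, SimpleGraph.card_incidenceFinset_eq_degree, degAt,
    ← SimpleGraph.card_neighborSet_eq_degree, ← Nat.card_eq_fintype_card, Nat.card_coe_set_eq]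
  rfl

theorem percProb_le_compCard_le {d : ℕ} (G : SimpleGraph V) (hdeg : ∀ v, degAt G v ≤ d)
    {p y : ℝ} (hp0 : 0 ≤ p) (hp1 : p ≤ 1) (hy : 1 ≤ y) {k : ℕ} (hk : k ≠ 0) (v : V) :
    percProb G p (fun H => k ≤ compCard H v) ≤ (1 - p + p * y) ^ (d * k) / y ^ (k - 1) := by
  classical
  have hdeg' v : incidenceCount (edgeFins G) v ≤ d :=
    (incidenceCount_edgeFins G v).trans_le (hdeg v)
  have hbudget : ∑ w ∈ {v}, incidenceCount (edgeFins G) w + (k - #{v}) * d ≤ d * k := by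
    rw [sum_singleton, card_singleton, mul_comm d k, ← Nat.sub_one_add_one hk, Nat.add_sub_cancel,
      Nat.succ_mul]
    have := hdeg' v
    omega
  show bernoulliProb (edgeFins G) p _ ≤ _
  simpa only [compCard_fromEdgeSet, card_singleton] using
    bernoulliProb_le_ncard_reachSet_le hp0 hp1 hy (edgeFins G) hdeg' {v} (d * k) hbudget

end Graph

section Numerics

open Real

lemma one_sub_mul_exp_le_exp_neg {ε : ℝ} (hε0 : 0 ≤ ε) (hε1 : ε < 1) :
    (1 - ε) * exp ε ≤ exp (-(ε ^ 2 / 2)) := by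
  have hlog : ε + ε ^ 2 / 2 ≤ -log (1 - ε) := by
    have := sum_le_hasSum (range 2) (fun i _ => by positivity)
      (hasSum_pow_div_log_of_abs_lt_one (by rwa [abs_of_nonneg hε0]))
    norm_num [sum_range_succ] at this
    linarith
  rw [← exp_log (by linarith : 0 < 1 - ε), ← exp_add, exp_le_exp]
  linarith

lemma one_add_div_pow_mul_le_exp {ε : ℝ} (hε0 : 0 ≤ ε) {d : ℕ} (hd : d ≠ 0) (k : ℕ) :
    (1 + ε / d) ^ (d * k) ≤ exp (ε * k) := by
  calc (1 + ε / d) ^ (d * k) ≤ exp (ε / d) ^ (d * k) := by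
        gcongr
        linarith [add_one_le_exp (ε / d)]
    _ = exp (ε * k) := by
        rw [← exp_nat_mul]
        push_cast
        field_simp

lemma one_sub_pow_mul_exp_le {ε : ℝ} (hε0 : 0 ≤ ε) (hε1 : ε < 1) {k : ℕ} (hk : k ≠ 0) :
    (1 - ε) ^ (k - 1) * exp (ε * k) ≤ exp (-(ε ^ 2 * k / 2)) / (1 - ε) := by
  have h1ε : 0 < 1 - ε := by linarith
  rw [le_div_iff₀ h1ε]
  calc (1 - ε) ^ (k - 1) * exp (ε * k) * (1 - ε) = ((1 - ε) * exp ε) ^ k := by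
        rw [mul_pow, ← exp_nat_mul, mul_comm _ (1 - ε), ← mul_assoc, ← pow_succ',
          Nat.sub_one_add_one hk, mul_comm ε]
    _ ≤ exp (-(ε ^ 2 / 2)) ^ k := by
        gcongr
        exact one_sub_mul_exp_le_exp_neg hε0 hε1
    _ = exp (-(ε ^ 2 * k / 2)) := by
        rw [← exp_nat_mul]
        ring_nf

lemma mul_exp_neg_le_inv {n t : ℝ} (hn : 0 < n) (ht : 2 * log n ≤ t) : n * exp (-t) ≤ n⁻¹ := by
  calc n * exp (-t) ≤ n * exp (-(2 * log n)) := by gcongr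
    _ = n⁻¹ := by
        rw [exp_neg, ← log_rpow hn, exp_log (by positivity)]
        field_simp
        norm_num

end Numerics

section Subcritical

open Real

variable {V : Type*} [Fintype V] {ε : ℝ} {d : ℕ}

lemma subcritical_prob_le_one (hε0 : 0 ≤ ε) (hd : d ≠ 0) : (1 - ε) / d ≤ 1 := by
  have : (1 : ℝ) ≤ d := by exact_mod_cast Nat.one_le_iff_ne_zero.2 hd
  exact div_le_one_of_le₀ (by linarith) (by linarith)

theorem percProb_le_compCard_le_of_subcritical (hε0 : 0 ≤ ε) (hε1 : ε < 1) (hd : d ≠ 0)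
    (G : SimpleGraph V) (hdeg : ∀ v, degAt G v ≤ d) {k : ℕ} (hk : k ≠ 0) (v : V) :
    percProb G ((1 - ε) / d) (fun H => k ≤ compCard H v) ≤ exp (-(ε ^ 2 * k / 2)) / (1 - ε) := by
  have h1ε : 0 < 1 - ε := by linarith
  have hX : 1 - (1 - ε) / d + (1 - ε) / d * (1 - ε)⁻¹ = 1 + ε / d := by
    field_simp
    ring
  calc _ ≤ (1 + ε / d) ^ (d * k) / (1 - ε)⁻¹ ^ (k - 1) :=
        hX ▸ percProb_le_compCard_le G hdeg (by positivity) (subcritical_prob_le_one hε0 hd)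
          ((one_le_inv₀ h1ε).2 (by linarith)) hk v
    _ = (1 - ε) ^ (k - 1) * (1 + ε / d) ^ (d * k) := by rw [inv_pow, div_inv_eq_mul, mul_comm]
    _ ≤ (1 - ε) ^ (k - 1) * exp (ε * k) := by
        gcongr
        exact one_add_div_pow_mul_le_exp hε0 hd k
    _ ≤ _ := one_sub_pow_mul_exp_le hε0 hε1 hk

theorem one_sub_le_percProb_forall_compCard_le (hε0 : 0 ≤ ε) (hε1 : ε < 1) (hd : d ≠ 0)
    (G : SimpleGraph V) (hdeg : ∀ v, degAt G v ≤ d) {K : ℝ} (hK : 0 ≤ K) :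
    1 - Fintype.card V * exp (-(ε ^ 2 * K / 2)) / (1 - ε)
      ≤ percProb G ((1 - ε) / d) (fun H => ∀ v, (compCard H v : ℝ) ≤ K) := by
  have hp0 : 0 ≤ (1 - ε) / (d : ℝ) := div_nonneg (by linarith) d.cast_nonneg
  have hp1 := subcritical_prob_le_one hε0 hd
  set k := ⌊K⌋₊ + 1
  have hbad : percProb G ((1 - ε) / d) (fun H => ∃ v ∈ univ, k ≤ compCard H v)
      ≤ Fintype.card V * exp (-(ε ^ 2 * K / 2)) / (1 - ε) :=
    calc _ ≤ ∑ v, percProb G ((1 - ε) / d) (fun H => k ≤ compCard H v) :=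
          bernoulliProb_exists_le_sum hp0 hp1 _ _ _
      _ ≤ ∑ _v : V, exp (-(ε ^ 2 * K / 2)) / (1 - ε) := sum_le_sum fun v _ => by
          refine (percProb_le_compCard_le_of_subcritical hε0 hε1 hd G hdeg (by omega) v).trans ?_
          gcongr
          exact_mod_cast (Nat.lt_floor_add_one K).le
      _ = _ := by simp [mul_div_assoc]
  calc _ ≤ 1 - percProb G ((1 - ε) / d) (fun H => ∃ v ∈ univ, k ≤ compCard H v) := by linarith
    _ ≤ _ := one_sub_bernoulliProb_le hp0 hp1 fun F _ hF v => by
        have : ¬ k ≤ compCard _ v := fun h => hF ⟨v, mem_univ v, h⟩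
        exact (Nat.le_floor_iff hK).1 (by omega)

end Subcritical

/-- In the subcritical regime `p = (1-ε)/d`, whp (uniformly over all
`d`-regular graphs on `n` vertices) every component of `G_p` has order at most
`9 log n / ε²`. -/
theorem stmt_0 (ε : ℝ) (hε0 : 0 < ε) (hε1 : ε < 1) (δ : ℝ) (hδ : 0 < δ) :
    ∃ n₀ : ℕ, ∀ (V : Type) [Fintype V] (G : SimpleGraph V) (d : ℕ),
      1 ≤ d → IsRegOfDeg G d → n₀ ≤ Fintype.card V →
      1 - δ ≤ percProb G ((1 - ε) / (d : ℝ))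
        (fun H => ∀ v : V,
          (compCard H v : ℝ) ≤ 9 * Real.log (Fintype.card V) / ε ^ 2) := by
  refine ⟨⌈((1 - ε) * δ)⁻¹⌉₊ + 1, fun V _ G d hd hreg hn => ?_⟩
  set n : ℝ := (Fintype.card V : ℝ)
  have hn1 : 1 ≤ n := Nat.one_le_cast.2 (by omega)
  have hnδ : ((1 - ε) * δ)⁻¹ < n := Nat.lt_of_ceil_lt (by omega)
  have hlog : 2 * Real.log n ≤ ε ^ 2 * (9 * Real.log n / ε ^ 2) / 2 := by
    field_simp
    linarith [Real.log_nonneg hn1]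
  have htail : n * Real.exp (-(ε ^ 2 * (9 * Real.log n / ε ^ 2) / 2)) / (1 - ε) ≤ δ := by
    rw [div_le_iff₀ (by linarith)]
    refine (mul_exp_neg_le_inv (by positivity) hlog).trans ?_
    rw [inv_le_comm₀ (by positivity) (by nlinarith), mul_comm]
    exact hnδ.le
  exact le_trans (by linarith) (one_sub_le_percProb_forall_compCard_le hε0.le hε1 (by omega) G
    (fun v => (hreg v).le) (by positivity))
end

section
/- There exist ε₀ > 0 and K > 0 such that for every ε ∈ (0, ε₀), |y(ε) − 2ε| ≤ K·ε². -/
/-!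
Put `a = (1 + ε) y`, so that `1 - y = exp (-a)`. The elementary bound `(1 - a/2)² ≤ exp (-a)`
(valid for `a ≤ 2`) gives the a priori estimate `(1 + ε)² y ≤ 4ε`, hence `a ≤ 1` for small `ε`.
Then the Taylor expansion `exp (-a) = 1 - a + a²/2 + O(a³)`, divided by `y`, yields
`(1 + ε)² y = 2ε + O(y²) = 2ε + O(ε²)`, and `(1 + ε)² y = y + O(ε²)`.
-/

open Finset

variable {V : Type*}

open Real

theorem abs_exp_neg_sub_quadratic_le {a : ℝ} (ha₀ : 0 ≤ a) (ha₁ : a ≤ 1) :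
    |exp (-a) - (1 - a + a ^ 2 / 2)| ≤ a ^ 3 := by
  have h := Real.exp_bound (x := -a) (by rwa [abs_neg, abs_of_nonneg ha₀]) (n := 3) (by norm_num)
  simp only [Finset.sum_range_succ, Finset.sum_range_zero, abs_neg, abs_of_nonneg ha₀] at h
  norm_num [Nat.factorial] at h
  calc |exp (-a) - (1 - a + a ^ 2 / 2)| = |exp (-a) - (1 + -a + a ^ 2 / 2)| := by ring_nf
    _ ≤ a ^ 3 * (2 / 9) := h
    _ ≤ a ^ 3 := by nlinarith [pow_nonneg ha₀ 3]

section FixedPoint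

variable {ε y : ℝ}

theorem one_add_sq_mul_le_of_eq_one_sub_exp (hy₀ : 0 < y) (hy₁ : y < 1) (hε : ε ≤ 1)
    (h : y = 1 - exp (-(1 + ε) * y)) : (1 + ε) ^ 2 * y ≤ 4 * ε := by
  have ha : (1 + ε) * y ≤ 2 := by nlinarith
  have hexp : (1 - (1 + ε) * y / 2) ^ 2 ≤ exp (-(1 + ε) * y) := by
    rw [neg_mul]
    exact_mod_cast one_sub_div_pow_le_exp_neg (n := 2) (by exact_mod_cast ha)
  have hy : y * ((1 + ε) ^ 2 * y) ≤ y * (4 * ε) := by linarith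
  exact le_of_mul_le_mul_left hy hy₀

theorem abs_one_add_sq_mul_sub_le_of_eq_one_sub_exp (hy₀ : 0 < y) (ha₀ : 0 ≤ (1 + ε) * y)
    (ha₁ : (1 + ε) * y ≤ 1) (h : y = 1 - exp (-(1 + ε) * y)) :
    |(1 + ε) ^ 2 * y - 2 * ε| ≤ 2 * (1 + ε) ^ 3 * y ^ 2 := by
  have hexp := abs_exp_neg_sub_quadratic_le ha₀ ha₁
  rw [show exp (-((1 + ε) * y)) = 1 - y by rw [← neg_mul]; linarith] at hexp
  have hy : y * |(1 + ε) ^ 2 * y - 2 * ε| ≤ y * (2 * (1 + ε) ^ 3 * y ^ 2) := calc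
    y * |(1 + ε) ^ 2 * y - 2 * ε|
        = 2 * |1 - y - (1 - (1 + ε) * y + ((1 + ε) * y) ^ 2 / 2)| := by
          rw [← abs_of_pos hy₀, ← abs_mul, ← abs_two, ← abs_mul, abs_of_pos hy₀, ← abs_neg]
          ring_nf
    _ ≤ y * (2 * (1 + ε) ^ 3 * y ^ 2) := by linarith [mul_pow (1 + ε) y 3]
  exact le_of_mul_le_mul_left hy hy₀

end FixedPoint

/-- `y(ε) = 2ε + O(ε²)` for small `ε`. -/
theorem stmt_12 :
    ∃ ε₀ > (0 : ℝ), ∃ K > (0 : ℝ), ∀ ε : ℝ, 0 < ε → ε < ε₀ →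
      ∀ y : ℝ, 0 < y → y < 1 → y = 1 - Real.exp (-(1 + ε) * y) →
      |y - 2 * ε| ≤ K * ε ^ 2 := by
  refine ⟨1 / 8, by norm_num, 64, by norm_num, fun ε hε hε₀ y hy₀ hy₁ h => ?_⟩
  have hcrude := one_add_sq_mul_le_of_eq_one_sub_exp hy₀ hy₁ (by linarith) h
  have hy_le : y ≤ (1 + ε) ^ 2 * y := le_mul_of_one_le_left hy₀.le (by nlinarith)
  have hy : y ≤ 4 * ε := hy_le.trans hcrude
  have hfine := abs_one_add_sq_mul_sub_le_of_eq_one_sub_exp hy₀ (by positivity) (by nlinarith) h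
  calc |y - 2 * ε| ≤ |y - (1 + ε) ^ 2 * y| + |(1 + ε) ^ 2 * y - 2 * ε| := abs_sub_le _ _ _
    _ ≤ (2 * ε + ε ^ 2) * y + 2 * (1 + ε) ^ 3 * y ^ 2 := by
      gcongr
      rw [abs_of_nonpos (by linarith)]
      linarith
    _ ≤ (2 * ε + ε ^ 2) * (4 * ε) + 2 * (1 + ε) ^ 3 * (4 * ε) ^ 2 := by gcongr
    _ = (8 + 4 * ε + 32 * (1 + ε) ^ 3) * ε ^ 2 := by ring
    _ ≤ 64 * ε ^ 2 := by
      have h_cube : (1 + ε) ^ 3 ≤ (1 + 1 / 8) ^ 3 := by gcongr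
      gcongr
      linarith
end

section
/- Let C > 1 and let G^(1),…,G^(t) be connected graphs with 2 ≤ |V(G^(i))| ≤ C for all i ∈ [t], and let G = □_{i=1}^t G^(i). Then the isoperimetric constant of G satisfies i(G) ≥ 1/(2C); that is, for every nonempty S ⊆ V(G) with |S| ≤ |V(G)|/2, the number of edges of G with exactly one endpoint in S is at least |S|/(2C). -/
open Finset

variable {V : Type*}

/-! Double counting along canonical paths. Write `N` for the number of vertices of the product.
For `u ∈ S` and `v ∉ S`, go from `u` to `v` by moving the coordinates in increasing order,
coordinate `i` along a walk in `Gs i`; this path leaves `S` through an edge `x x'` in some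
direction `i`. That edge determines `v` below `i` and `u` above `i`, so it is charged by at most
`N * |V i| ≤ N * C` pairs. Hence `|S| (N - |S|) ≤ |∂S| N C`, and `|S| ≤ N / 2` finishes. -/

theorem Nat.exists_lt_and_not_succ (P : ℕ → Prop) {n : ℕ} (h0 : P 0) (hn : ¬ P n) :
    ∃ k < n, P k ∧ ¬ P (k + 1) := by
  induction n with
  | zero => exact absurd h0 hn
  | succ n ih =>
    by_cases h : P n
    · exact ⟨n, n.lt_succ_self, h, hn⟩
    · obtain ⟨k, hk, hPk⟩ := ih h
      exact ⟨k, hk.trans n.lt_succ_self, hPk⟩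

def SimpleGraph.edgeBoundary (G : SimpleGraph V) (S : Set V) : Set (Sym2 V) :=
  {e | e ∈ G.edgeSet ∧ ∃ u v, e = s(u, v) ∧ u ∈ S ∧ v ∉ S}

section CanonicalPath

variable {ι : Type*} [LinearOrder ι] {α : ι → Type*}

def OnCanonicalPath (i : ι) (u v x : ∀ i, α i) : Prop :=
  (∀ j < i, x j = v j) ∧ ∀ j, i < j → x j = u j

theorem card_le_of_forall_onCanonicalPath [Fintype ι] [∀ i, Fintype (α i)] {i : ι}
    {x : ∀ i, α i} {P : Finset ((∀ i, α i) × (∀ i, α i))}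
    (hP : ∀ p ∈ P, OnCanonicalPath i p.1 p.2 x) :
    P.card ≤ Fintype.card (∀ i, α i) * Fintype.card (α i) := by
  let g : (∀ i, α i) × (∀ i, α i) → (∀ i, α i) × α i :=
    fun p => (fun j => if j < i then p.1 j else p.2 j, p.1 i)
  have hg : Set.InjOn g P := by
    intro p hp q hq hpq
    obtain ⟨hpv, hpu⟩ := hP p hp
    obtain ⟨hqv, hqu⟩ := hP q hq
    have hmix j := congrFun (congrArg Prod.fst hpq) j
    have hi : p.1 i = q.1 i := congrArg Prod.snd hpq
    simp only [g] at hmix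
    refine Prod.ext (funext fun j => ?_) (funext fun j => ?_)
    · rcases lt_trichotomy j i with h | rfl | h
      · simpa [h] using hmix j
      · exact hi
      · rw [← hpu j h, hqu j h]
    · rcases lt_trichotomy j i with h | rfl | h
      · rw [← hpv j h, hqv j h]
      · simpa using hmix j
      · simpa [not_lt_of_gt h] using hmix j
  simpa [Fintype.card_prod] using Finset.card_le_card_of_injOn g (fun _ _ => mem_univ _) hg

end CanonicalPath

section ProductGraph

variable {t : ℕ} {α : Fin t → Type*}

def canonicalVertex (m : ℕ) (u v : ∀ i, α i) : ∀ i, α i :=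
  fun j => if (j : ℕ) < m then v j else u j

@[simp]
theorem canonicalVertex_zero (u v : ∀ i, α i) : canonicalVertex 0 u v = u := by
  funext j
  simp [canonicalVertex]

theorem canonicalVertex_of_le {m : ℕ} (h : t ≤ m) (u v : ∀ i, α i) :
    canonicalVertex m u v = v := by
  funext j
  simp [canonicalVertex, j.isLt.trans_le h]

theorem canonicalVertex_succ (u v : ∀ i, α i) (i : Fin t) :
    canonicalVertex (i + 1) u v = Function.update (canonicalVertex i u v) i (v i) := by
  funext j
  rcases lt_trichotomy j i with h | rfl | h
  · simp [canonicalVertex, h.ne, Fin.lt_def.mp h, Nat.lt_succ_of_lt (Fin.lt_def.mp h)]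
  · simp [canonicalVertex]
  · have h' : ¬ (j : ℕ) < i + 1 := by have := Fin.lt_def.mp h; omega
    simp [canonicalVertex, h.ne', h', not_lt_of_gt h]

theorem onCanonicalPath_update_canonicalVertex (u v : ∀ i, α i) (i : Fin t) (a : α i) :
    OnCanonicalPath i u v (Function.update (canonicalVertex i u v) i a) := by
  refine ⟨fun j hj => ?_, fun j hj => ?_⟩
  · simp [canonicalVertex, hj.ne, Fin.lt_def.mp hj]
  · simp [canonicalVertex, hj.ne', not_lt_of_gt hj]

theorem exists_boundary_update_onCanonicalPath (Gs : ∀ i, SimpleGraph (α i))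
    (hconn : ∀ i, (Gs i).Connected) {S : Set (∀ i, α i)} {u v : ∀ i, α i}
    (hu : u ∈ S) (hv : v ∉ S) :
    ∃ (i : Fin t) (x : ∀ i, α i) (b : α i), x ∈ S ∧ Function.update x i b ∉ S ∧
      (Gs i).Adj (x i) b ∧ OnCanonicalPath i u v x := by
  obtain ⟨k, hk, hkS, hk1S⟩ := Nat.exists_lt_and_not_succ (canonicalVertex · u v ∈ S)
    (n := t) (by simpa using hu) (by rwa [canonicalVertex_of_le le_rfl])
  set i : Fin t := ⟨k, hk⟩
  set x := canonicalVertex i u v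
  obtain ⟨w⟩ := (hconn i).preconnected (x i) (v i)
  obtain ⟨d, -, hd, hd'⟩ := w.exists_boundary_dart {a | Function.update x i a ∈ S}
    (by simpa using hkS) (by simpa [x, ← canonicalVertex_succ] using hk1S)
  refine ⟨i, Function.update x i d.fst, d.snd, hd, by simpa using hd', ?_,
    onCanonicalPath_update_canonicalVertex u v i _⟩
  rw [Function.update_self]
  exact d.adj

theorem eq_of_sym2_eq_update {S : Set (∀ i, α i)} {x x' : ∀ i, α i} {i i' : Fin t} {b : α i}
    {b' : α i'} (hx : x ∈ S) (hb : Function.update x i b ∉ S) (hx' : x' ∈ S)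
    (hb' : Function.update x' i' b' ∉ S) (hne : b ≠ x i)
    (h : s(x, Function.update x i b) = s(x', Function.update x' i' b')) : x' = x ∧ i' = i := by
  obtain ⟨rfl, hupd⟩ : x = x' ∧ Function.update x i b = Function.update x' i' b' := by
    rcases Sym2.eq_iff.mp h with h | ⟨rfl, -⟩
    · exact h
    · exact absurd hx hb'
  refine ⟨rfl, by_contra fun hii' => hne ?_⟩
  simpa [Function.update_of_ne (Ne.symm hii')] using congrFun hupd i

theorem prodGraph_adj_update {Gs : ∀ i, SimpleGraph (α i)} {x : ∀ i, α i} {i : Fin t}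
    {b : α i} (h : (Gs i).Adj (x i) b) : (prodGraph Gs).Adj x (Function.update x i b) :=
  ⟨i, by rwa [Function.update_self], fun _ hj => (Function.update_of_ne hj _ _).symm⟩

variable [∀ i, Fintype (α i)]

theorem ncard_mul_sub_le_ncard_edgeBoundary_mul (Gs : ∀ i, SimpleGraph (α i))
    (hconn : ∀ i, (Gs i).Connected) {C : ℝ} (hC : ∀ i, (Fintype.card (α i) : ℝ) ≤ C)
    (S : Set (∀ i, α i)) :
    (S.ncard : ℝ) * (Fintype.card (∀ i, α i) - S.ncard) ≤
      ((prodGraph Gs).edgeBoundary S).ncard * (Fintype.card (∀ i, α i) * C) := by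
  classical
  let r (p : (∀ i, α i) × (∀ i, α i)) (e : Sym2 (∀ i, α i)) : Prop :=
    ∃ (i : Fin t) (x : ∀ i, α i) (b : α i), e = s(x, Function.update x i b) ∧ x ∈ S ∧
      Function.update x i b ∉ S ∧ (Gs i).Adj (x i) b ∧ OnCanonicalPath i p.1 p.2 x
  have key := Finset.card_nsmul_le_card_nsmul (R := ℝ) r (m := 1)
    (s := S.toFinset ×ˢ S.toFinsetᶜ) (t := ((prodGraph Gs).edgeBoundary S).toFinset)
    (n := Fintype.card (∀ i, α i) * C) ?_ ?_
  · rw [card_product, card_compl, nsmul_eq_mul, nsmul_eq_mul, mul_one, Nat.cast_mul,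
      Nat.cast_sub (card_le_univ _)] at key
    simpa only [Set.ncard_eq_toFinset_card'] using key
  · rintro p hp
    obtain ⟨hu, hv⟩ : p.1 ∈ S ∧ p.2 ∉ S := by simpa using hp
    obtain ⟨i, x, b, hx, hb, hadj, hpath⟩ :=
      exists_boundary_update_onCanonicalPath Gs hconn hu hv
    refine Nat.one_le_cast.mpr (card_pos.mpr ⟨s(x, Function.update x i b), ?_⟩)
    refine (mem_bipartiteAbove r).mpr ⟨Set.mem_toFinset.mpr ?_, i, x, b, rfl, hx, hb, hadj,
      hpath⟩
    exact ⟨prodGraph_adj_update hadj, x, _, rfl, hx, hb⟩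
  · intro e he
    rcases (bipartiteBelow r (S.toFinset ×ˢ S.toFinsetᶜ) e).eq_empty_or_nonempty with
      h | ⟨p₀, hp₀⟩
    · obtain ⟨hE, u, v, rfl, -⟩ := Set.mem_toFinset.mp he
      obtain ⟨i, -⟩ := hE
      rw [h, card_empty, Nat.cast_zero]
      exact mul_nonneg (Nat.cast_nonneg _) ((Nat.cast_nonneg _).trans (hC i))
    obtain ⟨-, i, x, b, rfl, hx, hb, hadj, -⟩ := (mem_bipartiteBelow r).mp hp₀
    have hcard := card_le_of_forall_onCanonicalPath (i := i) (x := x)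
      (P := bipartiteBelow r (S.toFinset ×ˢ S.toFinsetᶜ) s(x, Function.update x i b)) (by
        rintro p hp
        obtain ⟨-, i', x', b', he, hx', hb', -, hpath⟩ := (mem_bipartiteBelow r).mp hp
        obtain ⟨rfl, rfl⟩ := eq_of_sym2_eq_update hx hb hx' hb' hadj.ne' he
        exact hpath)
    calc (_ : ℝ) ≤ Fintype.card (∀ i, α i) * Fintype.card (α i) := by exact_mod_cast hcard
      _ ≤ _ := by gcongr; exact hC i

end ProductGraph

theorem stmt_13_general (C : ℝ) (hC : 1 < C) (t : ℕ)
    (V : Fin t → Type) [∀ i, Fintype (V i)]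
    (Gs : ∀ i, SimpleGraph (V i))
    (hconn : ∀ i, (Gs i).Connected)
    (hub : ∀ i, (Fintype.card (V i) : ℝ) ≤ C)
    (S : Set (∀ i, V i))
    (hhalf : 2 * S.ncard ≤ Fintype.card (∀ i, V i)) :
    (S.ncard : ℝ) / (2 * C) ≤
      (({e : Sym2 (∀ i, V i) | e ∈ (prodGraph Gs).edgeSet ∧
          ∃ u v, e = s(u, v) ∧ u ∈ S ∧ v ∉ S}).ncard : ℝ) := by
  change (S.ncard : ℝ) / (2 * C) ≤ (((prodGraph Gs).edgeBoundary S).ncard : ℝ)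
  have hcount := ncard_mul_sub_le_ncard_edgeBoundary_mul Gs hconn hub S
  have hN : 0 < (Fintype.card (∀ i, V i) : ℝ) := by
    have := fun i => (hconn i).nonempty
    exact_mod_cast Fintype.card_pos
  have hhalf' : 2 * (S.ncard : ℝ) ≤ Fintype.card (∀ i, V i) := by exact_mod_cast hhalf
  set N : ℝ := (Fintype.card (∀ i, V i) : ℝ)
  set B : ℝ := (((prodGraph Gs).edgeBoundary S).ncard : ℝ)
  rw [div_le_iff₀ (by linarith)]
  refine le_of_mul_le_mul_right ?_ hN
  calc (S.ncard : ℝ) * N ≤ 2 * (S.ncard * (N - S.ncard)) := by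
        nlinarith [(S.ncard).cast_nonneg (α := ℝ)]
    _ ≤ 2 * (B * (N * C)) := by linarith
    _ = B * (2 * C) * N := by ring

/-- isoperimetric constant of a product of connected graphs of order
between 2 and `C`: every set `S` of at most half the vertices has edge boundary of size
at least `|S|/(2C)`. -/
theorem stmt_13 (C : ℝ) (hC : 1 < C) (t : ℕ)
    (V : Fin t → Type) [∀ i, Fintype (V i)]
    (Gs : ∀ i, SimpleGraph (V i))
    (hconn : ∀ i, (Gs i).Connected)
    (hlb : ∀ i, 2 ≤ Fintype.card (V i))
    (hub : ∀ i, (Fintype.card (V i) : ℝ) ≤ C)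
    (S : Set (∀ i, V i)) (hS : S.Nonempty)
    (hhalf : 2 * S.ncard ≤ Fintype.card (∀ i, V i)) :
    (S.ncard : ℝ) / (2 * C) ≤
      (({e : Sym2 (∀ i, V i) | e ∈ (prodGraph Gs).edgeSet ∧
          ∃ u v, e = s(u, v) ∧ u ∈ S ∧ v ∉ S}).ncard : ℝ) :=
  stmt_13_general C hC t V Gs hconn hub S hhalf
end
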